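/- arXiv:0711.4210 — 2 statements merged into one kernel-verified Lean document; each statement's English description precedes it below -/
import Mathlib

section
/- Let G = H ⋊ T be a finite group with T a p-group, and let Q ⊴ H be a T-invariant normal subgroup of H whose order is coprime to p. Then C_H(T)Q/Q = C_{H/Q}(T); that is, every T-fixed point of H/Q lifts to a T-fixed point of H. -/
/-!
A `T`-fixed coset `h₀Q` is a `T`-invariant subset of `H` with `|Q|` elements, a number prime to
`p`; since `T` is a `p`-group, its orbits on `h₀Q` have `p`-power length, so one of them is a point.
-/

theorem QuotientGroup.card_fiber_mk {G : Type*} [Group G] (s : Subgroup G) (g : G) :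
    Nat.card {x : G | (x : G ⧸ s) = g} = Nat.card s :=
  Nat.card_congr ((Equiv.setCongr (eq_class_eq_leftCoset s g)).trans
    (Subgroup.leftCosetEquivSubgroup g))

theorem IsPGroup.exists_fixed_point_mem_of_not_dvd_card {p : ℕ} [Fact p.Prime] {G X : Type*}
    [Group G] [MulAction G X] (hG : IsPGroup p G) {s : Set X} (hs : ∀ g : G, ∀ x ∈ s, g • x ∈ s)
    (hps : ¬p ∣ Nat.card s) : ∃ x ∈ s, ∀ g : G, g • x = x := by
  let S : SubMulAction G X := ⟨s, fun g _ hx => hs g _ hx⟩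
  obtain ⟨x, hx⟩ := hG.nonempty_fixed_point_of_prime_not_dvd_card S (by exact hps)
  exact ⟨x, x.2, fun g => congrArg Subtype.val (hx g)⟩

theorem fixed_points_lift_mod_coprime_normal_general {H T : Type*} [Group H]
    [Group T] (p : ℕ) (hp : p.Prime)
    (φ : T →* MulAut H) (hT : IsPGroup p T)
    (Q : Subgroup H) [Q.Normal]
    (hQinv : ∀ t : T, ∀ q ∈ Q, φ t q ∈ Q)
    (hQcop : (Nat.card Q).Coprime p) :
    ∀ x : H ⧸ Q,
      (∀ t : T, QuotientGroup.map Q Q ((φ t).toMonoidHom) (fun q hq => hQinv t q hq) x = x) ↔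
        ∃ h : H, (∀ t : T, φ t h = h) ∧ QuotientGroup.mk h = x := by
  let _ : MulAction T H := MulAction.compHom H φ
  have : Fact p.Prime := ⟨hp⟩
  intro x
  induction x using QuotientGroup.induction_on with | H h₀ => ?_
  constructor
  · intro hfix
    have hcoset_inv : ∀ t : T, ∀ h : H, (h : H ⧸ Q) = h₀ → ((t • h : H) : H ⧸ Q) = h₀ := by
      intro t h hh
      rw [← hfix t, ← hh]
      rfl
    have hcard : ¬p ∣ Nat.card {h : H | (h : H ⧸ Q) = h₀} := by
      rw [QuotientGroup.card_fiber_mk]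
      exact hp.coprime_iff_not_dvd.mp hQcop.symm
    obtain ⟨h, hh₀, hfixed⟩ := hT.exists_fixed_point_mem_of_not_dvd_card hcoset_inv hcard
    exact ⟨h, hfixed, hh₀⟩
  · rintro ⟨h, hfixed, hh₀⟩ t
    rw [← hh₀]
    exact congrArg _ (hfixed t)

theorem fixed_points_lift_mod_coprime_normal {H T : Type*} [Group H] [Finite H]
    [Group T] [Finite T] (p : ℕ) (hp : p.Prime)
    (φ : T →* MulAut H) (hT : IsPGroup p T)
    (Q : Subgroup H) [Q.Normal]
    (hQinv : ∀ t : T, ∀ q ∈ Q, φ t q ∈ Q)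
    (hQcop : (Nat.card Q).Coprime p) :
    ∀ x : H ⧸ Q,
      (∀ t : T, QuotientGroup.map Q Q ((φ t).toMonoidHom) (fun q hq => hQinv t q hq) x = x) ↔
        ∃ h : H, (∀ t : T, φ t h = h) ∧ QuotientGroup.mk h = x :=
  fixed_points_lift_mod_coprime_normal_general p hp φ hT Q hQinv hQcop
end

section
/- Let q be an odd prime, V a finite-dimensional vector space over 𝔽_q, and W a finite group acting linearly on V with |W| < q. If V is a W-invariant direct sum V = R₁ ⊕ R₂ of nonzero subspaces, and I ⊆ W is a conjugation-closed generating set of involutions each acting on V as a reflection (fixed space of codimension 1), then for each r ∈ I the (−1)-eigenspace [V, r] is contained in R₁ or in R₂, and r acts as the identity on the other summand. -/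
/-!
Put `f = ρ r - 1`. Since both summands are `f`-invariant, `range f = f R₁ ⊕ f R₂` with
`f Rᵢ ≤ Rᵢ`; as `r` is a reflection this range is a line, so one of `f R₁`, `f R₂` vanishes.
-/

section

variable {K V : Type*} [DivisionRing K] [AddCommGroup V] [Module K V]

theorem Submodule.eq_bot_or_eq_bot_of_disjoint_of_finrank_sup_le_one [FiniteDimensional K V]
    {A B : Submodule K V} (hAB : Disjoint A B) (h : Module.finrank K ↥(A ⊔ B) ≤ 1) :
    A = ⊥ ∨ B = ⊥ := by
  have hsum := Submodule.finrank_sup_add_finrank_inf_eq A B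
  rw [hAB.eq_bot, finrank_bot] at hsum
  rw [← Submodule.finrank_eq_zero, ← Submodule.finrank_eq_zero]
  omega

theorem LinearMap.range_eq_map_sup_map {R₁ R₂ : Submodule K V} (hcompl : IsCompl R₁ R₂)
    (f : V →ₗ[K] V) : LinearMap.range f = R₁.map f ⊔ R₂.map f := by
  rw [LinearMap.range_eq_map, ← hcompl.sup_eq_top, Submodule.map_sup]

theorem LinearMap.range_le_and_le_ker_or_of_finrank_range_le_one [FiniteDimensional K V]
    {R₁ R₂ : Submodule K V} (hcompl : IsCompl R₁ R₂) (f : V →ₗ[K] V)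
    (h₁ : R₁.map f ≤ R₁) (h₂ : R₂.map f ≤ R₂) (hf : Module.finrank K (LinearMap.range f) ≤ 1) :
    (LinearMap.range f ≤ R₁ ∧ R₂ ≤ LinearMap.ker f) ∨
      (LinearMap.range f ≤ R₂ ∧ R₁ ≤ LinearMap.ker f) := by
  rw [LinearMap.range_eq_map_sup_map hcompl] at hf ⊢
  rcases Submodule.eq_bot_or_eq_bot_of_disjoint_of_finrank_sup_le_one
      (hcompl.disjoint.mono h₁ h₂) hf with hR₁ | hR₂
  · right
    rw [hR₁, bot_sup_eq, LinearMap.le_ker_iff_map]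
    exact ⟨h₂, hR₁⟩
  · left
    rw [hR₂, sup_bot_eq, LinearMap.le_ker_iff_map]
    exact ⟨h₁, hR₂⟩

end

theorem reflection_eigenspace_localization_general (q : ℕ)
    [Fact q.Prime] {V : Type*} [AddCommGroup V] [Module (ZMod q) V]
    [FiniteDimensional (ZMod q) V]
    {W : Type*} [Group W]
    (ρ : W →* (V ≃ₗ[ZMod q] V))
    (R₁ R₂ : Submodule (ZMod q) V)
    (hcompl : IsCompl R₁ R₂)
    (hinv1 : ∀ w : W, ∀ v ∈ R₁, ρ w v ∈ R₁) (hinv2 : ∀ w : W, ∀ v ∈ R₂, ρ w v ∈ R₂)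
    (I : Set W)
    (hIrefl : ∀ i ∈ I, Module.finrank (ZMod q)
        (LinearMap.ker ((ρ i).toLinearMap - LinearMap.id)) + 1 = Module.finrank (ZMod q) V) :
    ∀ r ∈ I,
      (LinearMap.range ((ρ r).toLinearMap - LinearMap.id) ≤ R₁ ∧ ∀ v ∈ R₂, ρ r v = v) ∨
      (LinearMap.range ((ρ r).toLinearMap - LinearMap.id) ≤ R₂ ∧ ∀ v ∈ R₁, ρ r v = v) := by
  intro r hr
  have hreflection := hIrefl r hr
  set f : V →ₗ[ZMod q] V := (ρ r).toLinearMap - LinearMap.id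
  have hinvariant {R : Submodule (ZMod q) V} (hR : ∀ v ∈ R, ρ r v ∈ R) : R.map f ≤ R := by
    rintro _ ⟨v, hv, rfl⟩
    exact R.sub_mem (hR v hv) hv
  have hline : Module.finrank (ZMod q) (LinearMap.range f) ≤ 1 := by
    have := LinearMap.finrank_range_add_finrank_ker f
    omega
  have hfixed {R : Submodule (ZMod q) V} (hR : R ≤ LinearMap.ker f) : ∀ v ∈ R, ρ r v = v :=
    fun v hv ↦ sub_eq_zero.mp (hR hv)
  rcases LinearMap.range_le_and_le_ker_or_of_finrank_range_le_one hcompl f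
      (hinvariant (hinv1 r)) (hinvariant (hinv2 r)) hline with ⟨hrange, hker⟩ | ⟨hrange, hker⟩
  · exact .inl ⟨hrange, hfixed hker⟩
  · exact .inr ⟨hrange, hfixed hker⟩

theorem reflection_eigenspace_localization (q : ℕ) (hq : q.Prime) (hodd : q ≠ 2)
    [Fact q.Prime] {V : Type*} [AddCommGroup V] [Module (ZMod q) V]
    [FiniteDimensional (ZMod q) V]
    {W : Type*} [Group W] [Finite W] (hWq : Nat.card W < q)
    (ρ : W →* (V ≃ₗ[ZMod q] V))
    (R₁ R₂ : Submodule (ZMod q) V) (hR₁ : R₁ ≠ ⊥) (hR₂ : R₂ ≠ ⊥)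
    (hcompl : IsCompl R₁ R₂)
    (hinv1 : ∀ w : W, ∀ v ∈ R₁, ρ w v ∈ R₁) (hinv2 : ∀ w : W, ∀ v ∈ R₂, ρ w v ∈ R₂)
    (I : Set W) (hIconj : ∀ w : W, ∀ i ∈ I, w * i * w⁻¹ ∈ I)
    (hIgen : Subgroup.closure I = ⊤)
    (hIinvol : ∀ i ∈ I, i ≠ 1 ∧ i * i = 1)
    (hIrefl : ∀ i ∈ I, Module.finrank (ZMod q)
        (LinearMap.ker ((ρ i).toLinearMap - LinearMap.id)) + 1 = Module.finrank (ZMod q) V) :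
    ∀ r ∈ I,
      (LinearMap.range ((ρ r).toLinearMap - LinearMap.id) ≤ R₁ ∧ ∀ v ∈ R₂, ρ r v = v) ∨
      (LinearMap.range ((ρ r).toLinearMap - LinearMap.id) ≤ R₂ ∧ ∀ v ∈ R₁, ρ r v = v) :=
  reflection_eigenspace_localization_general q ρ R₁ R₂ hcompl hinv1 hinv2 I hIrefl
end
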